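/- Let G be a definition for a set Q ⊆ σ of atoms. For any set J of atoms disjoint from Q, there exists a unique Q-stable model I of G such that I \ Q = J. -/

import Mathlib

/-- Infinitary propositional formulas over signature `σ`:
atoms, conjunctions and disjunctions of (index-)sets of formulas, implication. -/
inductive Formula (σ : Type) : Type 1
  | atom : σ → Formula σ
  | conj : (ι : Type) → (ι → Formula σ) → Formula σ
  | disj : (ι : Type) → (ι → Formula σ) → Formula σ
  | imp : Formula σ → Formula σ → Formula σ

namespace Formula

variable {σ : Type}

/-- `⊥` is the empty disjunction. -/
def bot : Formula σ := Formula.disj Empty (fun e => e.elim)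

/-- Binary conjunction `F ∧ G`. -/
def and (F G : Formula σ) : Formula σ := Formula.conj Bool (fun b => if b then F else G)

/-- Binary disjunction `F ∨ G`. -/
def or (F G : Formula σ) : Formula σ := Formula.disj Bool (fun b => if b then F else G)

/-- Negation `¬F` abbreviates `F → ⊥`. -/
def neg (F : Formula σ) : Formula σ := Formula.imp F bot

/-- Conjunction of a set of atoms. -/
def conjAtoms (S : Set σ) : Formula σ := Formula.conj S (fun p => Formula.atom p.val)

/-- Satisfaction of an infinitary formula by an interpretation `I ⊆ σ`. -/
def Sat (I : Set σ) : Formula σ → Prop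
  | .atom p => p ∈ I
  | .conj _ f => ∀ i, Sat I (f i)
  | .disj _ f => ∃ i, Sat I (f i)
  | .imp F G => Sat I F → Sat I G

open Classical in
/-- The reduct `F^I`. -/
noncomputable def reduct (I : Set σ) : Formula σ → Formula σ
  | .atom p => if p ∈ I then Formula.atom p else bot
  | .conj ι f => Formula.conj ι (fun i => reduct I (f i))
  | .disj ι f => Formula.disj ι (fun i => reduct I (f i))
  | .imp F G => if Sat I (Formula.imp F G) then Formula.imp (reduct I F) (reduct I G) else bot

/-- `I` is an `A`-stable model of `F`: `I` is minimal w.r.t. `≤_A`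
(`J ≤_A I` iff `J ⊆ I` and `I \ J ⊆ A`) among interpretations satisfying `F^I`. -/
def AStable (A : Set σ) (I : Set σ) (F : Formula σ) : Prop :=
  Sat I (reduct I F) ∧ ∀ J : Set σ, J ⊆ I → I \ J ⊆ A → Sat J (reduct I F) → J = I

/-- A stable model is a `σ`-stable model. -/
def Stable (I : Set σ) (F : Formula σ) : Prop := AStable Set.univ I F

/-- The strictly positive atoms `P(F)`. -/
def spos : Formula σ → Set σ
  | .atom p => {p}
  | .conj _ f => ⋃ i, spos (f i)
  | .disj _ f => ⋃ i, spos (f i)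
  | .imp _ H => spos H

/-- `F` is (syntactically) the formula `⊥`, i.e. an empty disjunction. -/
def IsBot : Formula σ → Prop
  | .disj ι _ => IsEmpty ι
  | _ => False

open Classical in
mutual
/-- Positive nonnegated atoms `Pnn(F)`. -/
noncomputable def pnn : Formula σ → Set σ
  | .atom p => {p}
  | .conj _ f => ⋃ i, pnn (f i)
  | .disj _ f => ⋃ i, pnn (f i)
  | .imp G H => if IsBot H then ∅ else nnn G ∪ pnn H

/-- Negative nonnegated atoms `Nnn(F)`. -/
noncomputable def nnn : Formula σ → Set σ
  | .atom _ => ∅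
  | .conj _ f => ⋃ i, nnn (f i)
  | .disj _ f => ⋃ i, nnn (f i)
  | .imp G H => if IsBot H then ∅ else pnn G ∪ nnn H
end

/-- The rules of a formula, as antecedent/consequent pairs. -/
def rules : Formula σ → Set (Formula σ × Formula σ)
  | .atom _ => ∅
  | .conj _ f => ⋃ i, rules (f i)
  | .disj _ f => ⋃ i, rules (f i)
  | .imp G H => insert (G, H) (rules H)

/-- Edge relation of the positive dependency graph `DG_A[F]` (vertex set `A`). -/
noncomputable def DGEdge (F : Formula σ) (A : Set σ) (p q : σ) : Prop :=
  p ∈ A ∧ q ∈ A ∧ ∃ R ∈ rules F, p ∈ spos R.2 ∧ q ∈ pnn R.1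

/-- The atoms occurring in a formula. -/
def atoms : Formula σ → Set σ
  | .atom p => {p}
  | .conj _ f => ⋃ i, atoms (f i)
  | .disj _ f => ⋃ i, atoms (f i)
  | .imp G H => atoms G ∪ atoms H

/-- `G` is a definition for the set `Q` of atoms: a conjunction of formulas
`H ∧ C^∧ → q` with `q ∈ Q`, `C ⊆ Q`, and no atom of `Q` occurring in `H`. -/
def IsDefinition (Q : Set σ) (G : Formula σ) : Prop :=
  ∃ (ι : Type) (g : ι → Formula σ), G = Formula.conj ι g ∧
    ∀ i, ∃ (H : Formula σ) (C : Set σ) (q : σ),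
      q ∈ Q ∧ C ⊆ Q ∧ (∀ p ∈ Q, p ∉ atoms H) ∧
      g i = Formula.imp (Formula.and H (conjAtoms C)) (Formula.atom q)

end Formula

section Graph

variable {V : Type*}

/-- An infinite walk in the directed graph with edge relation `E`. -/
def IsInfWalk (E : V → V → Prop) (w : ℕ → V) : Prop := ∀ i, E (w i) (w (i + 1))

/-- The partition `{P₁, P₂}` is infinitely separable: every infinite walk
visits `P₁` or `P₂` only finitely often. -/
def InfSeparable (E : V → V → Prop) (P1 P2 : Set V) : Prop :=
  ∀ w : ℕ → V, IsInfWalk E w → {i | w i ∈ P1}.Finite ∨ {i | w i ∈ P2}.Finite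

/-- `u` and `v` are in the same strongly connected component:
each is reachable from the other. -/
def SameSCC (E : V → V → Prop) (u v : V) : Prop :=
  Relation.ReflTransGen E u v ∧ Relation.ReflTransGen E v u

/-- The partition `{P₁, P₂}` is separable: every strongly connected
component is contained in `P₁` or in `P₂`. -/
def Separable (E : V → V → Prop) (P1 P2 : Set V) : Prop :=
  ∀ u v, SameSCC E u v → ((u ∈ P1 ∧ v ∈ P1) ∨ (u ∈ P2 ∧ v ∈ P2))

end Graph

/-!
On interpretations `K ≤_Q I`, the bodies `H` of a definition for `Q` are evaluated exactly as in
`I`, so the reduct `G^I` has the same models as `G` there, and the `Q`-stable models of `G` are the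
`≤_Q`-minimal models of `G`. Among the models `K` of `G` with `K \ Q = J` the rules reduce to Horn
clauses over `Q` whose bodies are already decided by `J`, so the least fixed point of their
immediate-consequence operator above `J` is the least such model, hence the unique minimal one.
-/

theorem Set.sdiff_eq_sdiff_iff_of_subset {α : Type*} {s t u : Set α} (h : s ⊆ t) :
    s \ u = t \ u ↔ t \ s ⊆ u := by
  refine ⟨fun hst x hx => by_contra fun hxu => ?_, fun hts => ?_⟩
  · exact hx.2 (show x ∈ s \ u from hst ▸ ⟨hx.1, hxu⟩).1
  · exact (Set.sdiff_subset_sdiff_left h).antisymm fun x hx =>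
      ⟨by_contra fun hxs => hx.2 (hts ⟨hx.1, hxs⟩), hx.2⟩

namespace Formula

variable {σ : Type}

section Satisfaction

variable {I K : Set σ}

@[simp]
theorem sat_atom {p : σ} : Sat I (atom p) ↔ p ∈ I := Iff.rfl

@[simp]
theorem sat_conj {ι : Type} {f : ι → Formula σ} : Sat I (conj ι f) ↔ ∀ i, Sat I (f i) := Iff.rfl

@[simp]
theorem sat_imp {F G : Formula σ} : Sat I (imp F G) ↔ (Sat I F → Sat I G) := Iff.rfl

@[simp]
theorem not_sat_bot : ¬ Sat I (bot : Formula σ) := fun ⟨e, _⟩ => e.elim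

@[simp]
theorem sat_and {F G : Formula σ} : Sat I (and F G) ↔ Sat I F ∧ Sat I G := by
  simp [and, Bool.forall_bool, and_comm]

@[simp]
theorem sat_conjAtoms {S : Set σ} : Sat I (conjAtoms S) ↔ S ⊆ I := by
  simp [conjAtoms, Set.subset_def]

theorem sat_congr {F : Formula σ} (h : ∀ p ∈ atoms F, p ∈ K ↔ p ∈ I) : Sat K F ↔ Sat I F := by
  induction F with
  | atom p => exact h p rfl
  | conj ι f ih => exact forall_congr' fun i => ih i fun p hp => h p (Set.mem_iUnion_of_mem i hp)
  | disj ι f ih => exact exists_congr fun i => ih i fun p hp => h p (Set.mem_iUnion_of_mem i hp)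
  | imp F G ihF ihG =>
    exact imp_congr (ihF fun p hp => h p (Or.inl hp)) (ihG fun p hp => h p (Or.inr hp))

@[simp]
theorem sat_reduct_atom {p : σ} : Sat K (reduct I (atom p)) ↔ p ∈ I ∧ p ∈ K := by
  by_cases hp : p ∈ I <;> simp [reduct, hp]

@[simp]
theorem sat_reduct_imp {F G : Formula σ} :
    Sat K (reduct I (imp F G)) ↔ Sat I (imp F G) ∧ (Sat K (reduct I F) → Sat K (reduct I G)) := by
  by_cases h : Sat I (imp F G) <;> simp only [reduct, h, if_true, if_false, sat_imp] <;> simp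

@[simp]
theorem reduct_and {F G : Formula σ} : reduct I (and F G) = and (reduct I F) (reduct I G) := by
  simp only [and, reduct]
  congr 1
  funext b
  cases b <;> rfl

@[simp]
theorem sat_reduct_conjAtoms {S : Set σ} : Sat K (reduct I (conjAtoms S)) ↔ S ⊆ I ∩ K := by
  change (∀ p : S, Sat K (reduct I (atom p.1))) ↔ _
  simp [Set.subset_def]

theorem sat_reduct_of_agree {F : Formula σ} (h : ∀ p ∈ atoms F, p ∈ K ↔ p ∈ I) :
    Sat K (reduct I F) ↔ Sat I F := by
  induction F with
  | atom p => exact sat_reduct_atom.trans (and_iff_left_of_imp (h p rfl).2)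
  | conj ι f ih =>
    exact forall_congr' fun i => ih i fun p hp => h p (Set.mem_iUnion_of_mem i hp)
  | disj ι f ih =>
    exact exists_congr fun i => ih i fun p hp => h p (Set.mem_iUnion_of_mem i hp)
  | imp F G ihF ihG =>
    rw [sat_reduct_imp, ihF fun p hp => h p (Or.inl hp), ihG fun p hp => h p (Or.inr hp)]
    exact and_iff_left_of_imp id

theorem sat_reduct_self {F : Formula σ} : Sat I (reduct I F) ↔ Sat I F :=
  sat_reduct_of_agree fun _ _ => Iff.rfl

end Satisfaction

section Rules

variable {I K Q : Set σ}

def rule (H : Formula σ) (C : Set σ) (q : σ) : Formula σ := imp (and H (conjAtoms C)) (atom q)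

theorem sat_rule {H : Formula σ} {C : Set σ} {q : σ} :
    Sat I (rule H C q) ↔ (Sat I H → C ⊆ I → q ∈ I) := by
  simp [rule]

theorem sat_reduct_rule {H : Formula σ} {C : Set σ} {q : σ} (hKI : K ⊆ I)
    (hH : ∀ p ∈ atoms H, p ∈ K ↔ p ∈ I) (hI : Sat I (rule H C q)) :
    Sat K (reduct I (rule H C q)) ↔ Sat K (rule H C q) := by
  have hCI : C ⊆ I ∩ K ↔ C ⊆ K := by rw [Set.inter_eq_right.2 hKI]
  have hqI : q ∈ I ∧ q ∈ K ↔ q ∈ K := and_iff_right_of_imp (hKI ·)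
  simp only [rule] at hI ⊢
  simp [hI, sat_reduct_of_agree hH, sat_congr hH, hCI, hqI]

variable {ι : Type} (H : ι → Formula σ) (C : ι → Set σ) (q : ι → σ)

def ruleConj : Formula σ := conj ι fun i => rule (H i) (C i) (q i)

theorem IsDefinition.exists_eq_ruleConj {G : Formula σ} (hG : IsDefinition Q G) :
    ∃ (ι : Type) (H : ι → Formula σ) (C : ι → Set σ) (q : ι → σ), G = ruleConj H C q ∧
      (∀ i, q i ∈ Q) ∧ ∀ i, ∀ p ∈ Q, p ∉ atoms (H i) := by
  obtain ⟨ι, g, rfl, hg⟩ := hG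
  choose H C q hqQ _ hHQ hg using hg
  exact ⟨ι, H, C, q, congrArg (conj ι) (funext hg), hqQ, hHQ⟩

variable {H C q}

theorem sat_ruleConj : Sat K (ruleConj H C q) ↔ ∀ i, Sat K (H i) → C i ⊆ K → q i ∈ K :=
  forall_congr' fun _ => sat_rule

theorem sat_reduct_ruleConj (hH : ∀ i, ∀ p ∈ Q, p ∉ atoms (H i)) (hKI : K ⊆ I) (hIK : I \ K ⊆ Q)
    (hI : Sat I (ruleConj H C q)) :
    Sat K (reduct I (ruleConj H C q)) ↔ Sat K (ruleConj H C q) := by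
  refine forall_congr' fun i => sat_reduct_rule hKI (fun p hp => ?_) (hI i)
  refine ⟨(hKI ·), fun hpI => by_contra fun hpK => hH i p (hIK (show p ∈ I \ K from ⟨hpI, hpK⟩)) hp⟩

theorem aStable_ruleConj_iff (hH : ∀ i, ∀ p ∈ Q, p ∉ atoms (H i)) :
    AStable Q I (ruleConj H C q) ↔
      Minimal (· ∈ {K | Sat K (ruleConj H C q) ∧ K \ Q = I \ Q}) I := by
  rw [AStable, minimal_iff, sat_reduct_self, Set.mem_ofPred_eq, eq_self_iff_true, and_true]
  refine and_congr_right fun hI => ⟨fun hmin K hK hKI => ?_, fun hmin K hKI hIK hK => ?_⟩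
  · have hIK := (Set.sdiff_eq_sdiff_iff_of_subset hKI).1 hK.2
    exact (hmin K hKI hIK ((sat_reduct_ruleConj hH hKI hIK hI).2 hK.1)).symm
  · exact (hmin ⟨(sat_reduct_ruleConj hH hKI hIK hI).1 hK,
      (Set.sdiff_eq_sdiff_iff_of_subset hKI).2 hIK⟩ hKI).symm

end Rules

section Consequences

variable {ι : Type} (H : ι → Formula σ) (C : ι → Set σ) (q : ι → σ) (J : Set σ)

def consequenceOp : Set σ →o Set σ where
  toFun S := J ∪ q '' {i | Sat J (H i) ∧ C i ⊆ S}
  monotone' _ _ hST :=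
    Set.union_subset_union_right _ (Set.image_mono fun _ hi => ⟨hi.1, hi.2.trans hST⟩)

variable {H C q J} {K Q : Set σ}

theorem consequenceOp_subset_iff {S : Set σ} :
    consequenceOp H C q J S ⊆ S ↔ J ⊆ S ∧ ∀ i, Sat J (H i) → C i ⊆ S → q i ∈ S := by
  change J ∪ q '' _ ⊆ S ↔ _
  rw [Set.union_subset_iff, Set.image_subset_iff]
  exact and_congr_right' (forall_congr' fun _ => and_imp)

theorem sat_ruleConj_iff_consequenceOp_subset (hH : ∀ i, ∀ p ∈ Q, p ∉ atoms (H i))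
    (hK : K \ Q = J) : Sat K (ruleConj H C q) ↔ consequenceOp H C q J K ⊆ K := by
  have hHK : ∀ i, Sat K (H i) ↔ Sat J (H i) := fun i => sat_congr fun p hp => by
    rw [← hK, Set.mem_sdiff, iff_self_and]
    exact fun _ hpQ => hH i p hpQ hp
  rw [consequenceOp_subset_iff, sat_ruleConj, and_iff_right (hK ▸ Set.sdiff_subset)]
  simp only [hHK]

theorem lfp_consequenceOp_sdiff (hq : ∀ i, q i ∈ Q) (hJ : Disjoint J Q) :
    (consequenceOp H C q J).lfp \ Q = J := by
  set M := (consequenceOp H C q J).lfp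
  have hJM : J ⊆ M := (OrderHom.map_lfp _).le.trans' Set.subset_union_left
  have hMJQ : M ⊆ J ∪ Q :=
    OrderHom.lfp_le _ (Set.union_subset_union_right J (Set.image_subset_iff.2 fun i _ => hq i))
  ext p
  exact ⟨fun hp => (hMJQ hp.1).resolve_right hp.2, fun hp => ⟨hJM hp, Set.disjoint_left.1 hJ hp⟩⟩

theorem isLeast_lfp_consequenceOp (hH : ∀ i, ∀ p ∈ Q, p ∉ atoms (H i)) (hq : ∀ i, q i ∈ Q)
    (hJ : Disjoint J Q) :
    IsLeast {K | Sat K (ruleConj H C q) ∧ K \ Q = J} (consequenceOp H C q J).lfp := by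
  have hM := lfp_consequenceOp_sdiff (H := H) (C := C) hq hJ
  exact ⟨⟨(sat_ruleConj_iff_consequenceOp_subset hH hM).2 (OrderHom.map_lfp _).le, hM⟩,
    fun K ⟨hK, hKQ⟩ => OrderHom.lfp_le _ ((sat_ruleConj_iff_consequenceOp_subset hH hKQ).1 hK)⟩

theorem existsUnique_aStable_ruleConj (hH : ∀ i, ∀ p ∈ Q, p ∉ atoms (H i)) (hq : ∀ i, q i ∈ Q)
    (hJ : Disjoint J Q) : ∃! I, AStable Q I (ruleConj H C q) ∧ I \ Q = J := by
  have hleast := isLeast_lfp_consequenceOp (C := C) hH hq hJ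
  have hiff : ∀ I, AStable Q I (ruleConj H C q) ∧ I \ Q = J ↔
      Minimal (· ∈ {K | Sat K (ruleConj H C q) ∧ K \ Q = J}) I := fun I =>
    ⟨fun ⟨hI, hIQ⟩ => hIQ ▸ (aStable_ruleConj_iff hH).1 hI,
      fun hI => ⟨(aStable_ruleConj_iff hH).2 (hI.prop.2 ▸ hI), hI.prop.2⟩⟩
  exact (existsUnique_congr hiff).2 ⟨_, hleast.minimal, fun I hI => hleast.minimal_iff.1 hI⟩

end Consequences

end Formula

/-- if `G` is a definition for `Q` and `J` is disjoint from `Q`,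
there is a unique `Q`-stable model `I` of `G` with `I \ Q = J`. -/
theorem exists_unique_qstable_of_definition {σ : Type} (Q : Set σ)
    (G : Formula σ) (hdef : Formula.IsDefinition Q G) (J : Set σ)
    (hJ : Disjoint J Q) :
    ∃! I : Set σ, Formula.AStable Q I G ∧ I \ Q = J := by
  obtain ⟨ι, H, C, q, rfl, hq, hH⟩ := hdef.exists_eq_ruleConj
  exact Formula.existsUnique_aStable_ruleConj hH hq hJ
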